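/- Multinomial formula for Segal polynomials: if T: ℝ^n → ℝ is given by Tx = c₁x₁ + ⋯ + c_n x_n, then for 0 ≤ k < N, p_k^{μ_T}(c₁x₁ + ⋯ + c_n x_n) = Σ_{β ∈ ℕ^n, |β| = k} (k!/β!) c^β p_β^μ(x). -/

import Mathlib

open MeasureTheory MvPolynomial

noncomputable section

def mdeg {ι : Type*} [Fintype ι] (β : ι →₀ ℕ) : ℕ := ∑ i, β i

def IsSegalFamily {ι : Type*} [Fintype ι] [DecidableEq ι]
    (μ : Measure (ι → ℝ)) (N : ℕ∞)
    (p : (ι →₀ ℕ) → MvPolynomial ι ℝ) : Prop :=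
  p 0 = 1 ∧
  (∀ β : ι →₀ ℕ, (mdeg β : ℕ∞) < N → ∀ j : ι,
      pderiv j (p β) = (β j : ℝ) • p (β - Finsupp.single j 1)) ∧
  (∀ β : ι →₀ ℕ, 0 < mdeg β → (mdeg β : ℕ∞) < N → ∫ x, eval x (p β) ∂μ = 0)

def HasMoments {ι : Type*} [Fintype ι] (μ : Measure (ι → ℝ)) (N : ℕ∞) : Prop :=
  ∀ k : ℕ, (k : ℕ∞) < N → Integrable (fun x : ι → ℝ => (∑ i, |x i|) ^ k) μ

def IsAppellFamily (μ : Measure ℝ) (N : ℕ∞) (p : ℕ → Polynomial ℝ) : Prop :=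
  p 0 = 1 ∧
  (∀ k : ℕ, ((k + 1 : ℕ) : ℕ∞) < N → Polynomial.derivative (p (k + 1)) = ((k : ℝ) + 1) • p k) ∧
  (∀ k : ℕ, 0 < k → (k : ℕ∞) < N → ∫ x, (p k).eval x ∂μ = 0)

/-! The linear map `segalMap p` sending each monomial `X^β` to `p β` commutes with every `∂ⱼ`
on polynomials of degree `< N`, and the `μ`-mean of `segalMap p f` is the constant term of `f`.
With `L = ∑ cᵢ Xᵢ`, the polynomials `q k (L)` and `segalMap p (L ^ k)` therefore both have
`∂ⱼ`-derivative `k cⱼ` times their predecessor and mean zero for `k > 0`; since a polynomial is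
determined by its partial derivatives and its mean, they coincide by induction on `k`. Expanding
`L ^ k` by the multinomial theorem gives the formula. -/

section MultiIndex

variable {ι : Type*} [Fintype ι]

theorem mdeg_eq_degree (β : ι →₀ ℕ) : mdeg β = β.degree :=
  (Finsupp.degree_eq_sum β).symm

theorem mdeg_sub_single_add_one {β : ι →₀ ℕ} {j : ι} (hj : β j ≠ 0) :
    mdeg (β - Finsupp.single j 1) + 1 = mdeg β := by
  have hle : Finsupp.single j 1 ≤ β := Finsupp.single_le_iff.mpr (Nat.one_le_iff_ne_zero.mpr hj)
  conv_rhs => rw [← tsub_add_cancel_of_le hle]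
  rw [mdeg_eq_degree, mdeg_eq_degree, map_add, Finsupp.degree_single]

theorem mdeg_le_totalDegree {R : Type*} [CommSemiring R] {f : MvPolynomial ι R} {β : ι →₀ ℕ}
    (hβ : β ∈ f.support) : mdeg β ≤ f.totalDegree := by
  rw [mdeg_eq_degree]
  exact le_totalDegree hβ

end MultiIndex

section PartialDerivatives

variable {σ R : Type*}

theorem MvPolynomial.eq_of_pderiv_eq [CommRing R] [IsAddTorsionFree R] {f g : MvPolynomial σ R}
    (hD : ∀ i, pderiv i f = pderiv i g) (hc : constantCoeff f = constantCoeff g) : f = g :=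
  MvPolynomial.coe_injective σ R <| MvPowerSeries.pderiv.ext
    (fun i => by simp only [MvPowerSeries.pderiv_coe, hD]) hc

theorem MvPolynomial.totalDegree_le_add_one_of_pderiv [CommSemiring R] [IsAddTorsionFree R]
    {f : MvPolynomial σ R} {d : ℕ} (h : ∀ i, (pderiv i f).totalDegree ≤ d) :
    f.totalDegree ≤ d + 1 := by
  refine Finset.sup_le fun m hm => ?_
  obtain rfl | ⟨i, hi⟩ := eq_or_ne m 0 |>.imp id Finsupp.ne_iff.mp
  · simp
  have hle : Finsupp.single i 1 ≤ m := Finsupp.single_le_iff.mpr (Nat.one_le_iff_ne_zero.mpr hi)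
  set m' := m - Finsupp.single i 1
  have hm' : m' + Finsupp.single i 1 = m := tsub_add_cancel_of_le hle
  have hcoeff : coeff m' (pderiv i f) ≠ 0 := by
    rw [coeff_pderiv, hm', mul_comm, ← Nat.cast_succ, ← nsmul_eq_mul]
    simpa using (nsmul_right_injective (m' i).succ_ne_zero).ne (mem_support_iff.mp hm)
  have hdeg : m'.degree + 1 = m.degree := by
    rw [← hm', map_add, Finsupp.degree_single]
  calc (m.sum fun _ e => e) = m'.degree + 1 := hdeg.symm
    _ ≤ d + 1 := by
      gcongr
      exact (le_totalDegree (mem_support_iff.mpr hcoeff)).trans (h i)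

end PartialDerivatives

theorem MvPolynomial.eval_polynomial_aeval {σ R : Type*} [CommSemiring R] (x : σ → R)
    (P : MvPolynomial σ R) (q : Polynomial R) :
    eval x (Polynomial.aeval P q) = q.eval (eval x P) := by
  rw [← aeval_eq_eval, ← Polynomial.aeval_algHom_apply, Polynomial.coe_aeval_eq_eval]

section LinearForm

variable {ι R : Type*} [Fintype ι]

theorem eval_sum_smul_X [CommSemiring R] (c x : ι → R) :
    eval x (∑ i, c i • X i : MvPolynomial ι R) = ∑ i, c i * x i := by
  simp [smul_eq_C_mul]

theorem isHomogeneous_sum_smul_X [CommSemiring R] (c : ι → R) :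
    (∑ i, c i • X i : MvPolynomial ι R).IsHomogeneous 1 :=
  IsHomogeneous.sum _ _ _ fun i _ => by
    rw [smul_eq_C_mul]; exact (isHomogeneous_X R i).C_mul _

theorem pderiv_sum_smul_X [CommSemiring R] (c : ι → R) (j : ι) :
    pderiv j (∑ i, c i • X i : MvPolynomial ι R) = C (c j) := by
  classical
  simp [smul_eq_C_mul, pderiv_X, Pi.single_apply]

theorem coeff_sum_smul_X_pow [Field R] [CharZero R] (c : ι → R) (β : ι →₀ ℕ) (k : ℕ) :
    coeff β ((∑ i, c i • X i : MvPolynomial ι R) ^ k) =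
      if mdeg β = k then
        ((Nat.factorial k : ℕ) : R) / ((∏ i, Nat.factorial (β i) : ℕ) : R) * ∏ i, c i ^ β i
      else 0 := by
  have hsum : (β.sum fun _ m => m) = mdeg β := Finsupp.sum_fintype _ _ fun _ => rfl
  rw [coeff_linearCombination_X_pow_of_fintype, hsum]
  split_ifs with hk
  · subst hk
    have hspec := Nat.multinomial_spec Finset.univ β
    rw [Finsupp.multinomial_of_support_subset (Finset.subset_univ _)] at hspec
    have hfact : ((∏ i, (β i).factorial : ℕ) : R) ≠ 0 :=
      Nat.cast_ne_zero.mpr (Finset.prod_ne_zero_iff.mpr fun i _ => (β i).factorial_ne_zero)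
    rw [Finsupp.prod_fintype _ _ fun _ => pow_zero _, mdeg, ← hspec, Nat.cast_mul,
      mul_div_cancel_left₀ _ hfact]
  · rfl

end LinearForm

section SegalMap

variable {σ R M : Type*} [CommSemiring R] [AddCommMonoid M] [Module R M]

def segalMap (p : (σ →₀ ℕ) → M) : MvPolynomial σ R →ₗ[R] M :=
  (basisMonomials σ R).constr R p

variable (p : (σ →₀ ℕ) → M)

theorem segalMap_monomial (β : σ →₀ ℕ) (a : R) : segalMap p (monomial β a) = a • p β := by
  have hβ : monomial β a = a • basisMonomials σ R β := by
    rw [coe_basisMonomials, smul_monomial, smul_eq_mul, mul_one]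
  rw [hβ, map_smul, segalMap, Module.Basis.constr_basis]

theorem segalMap_apply (f : MvPolynomial σ R) :
    segalMap p f = ∑ β ∈ f.support, coeff β f • p β := by
  conv_lhs => rw [f.as_sum]
  simp only [map_sum, segalMap_monomial]

theorem segalMap_one : segalMap p (1 : MvPolynomial σ R) = p 0 := by
  rw [← C_1, C_apply, segalMap_monomial, one_smul]

end SegalMap

theorem eval_segalMap {σ R : Type*} [CommSemiring R] (p : (σ →₀ ℕ) → MvPolynomial σ R)
    (f : MvPolynomial σ R) (x : σ → R) :
    eval x (segalMap p f) = ∑ β ∈ f.support, coeff β f * eval x (p β) := by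
  simp only [segalMap_apply, map_sum, smul_eval]

section Moments

variable {ι : Type*} {μ : Measure (ι → ℝ)}

theorem MvPolynomial.eq_of_pderiv_eq_of_integral_eval_eq [IsProbabilityMeasure μ]
    {f g : MvPolynomial ι ℝ} (hg : Integrable (fun x => eval x g) μ)
    (hD : ∀ j, pderiv j f = pderiv j g) (hI : ∫ x, eval x f ∂μ = ∫ x, eval x g ∂μ) : f = g := by
  obtain ⟨a, hfg⟩ : ∃ a, f = g + C a :=
    ⟨constantCoeff f - constantCoeff g, eq_of_pderiv_eq (by simp [hD]) (by simp)⟩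
  have ha : a = 0 := by
    simp only [hfg, map_add, eval_C] at hI
    rw [integral_add hg (integrable_const a), integral_const, probReal_univ, one_smul] at hI
    linarith
  rw [hfg, ha, C_0, add_zero]

variable [Fintype ι] {N : ℕ∞}

theorem HasMoments.integrable_eval (hμ : HasMoments μ N) {f : MvPolynomial ι ℝ}
    (hf : (f.totalDegree : ℕ∞) < N) : Integrable (fun x => eval x f) μ := by
  simp only [eval_eq]
  refine integrable_finsetSum _ fun d hd => Integrable.const_mul ?_ _
  have hd : ((∑ i ∈ d.support, d i : ℕ) : ℕ∞) < N :=
    lt_of_le_of_lt (by exact_mod_cast le_totalDegree hd) hf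
  refine (hμ _ hd).mono' (Continuous.aestronglyMeasurable (by fun_prop))
    (Filter.Eventually.of_forall fun x => ?_)
  rw [Real.norm_eq_abs, Finset.abs_prod, ← Finset.prod_pow_eq_pow_sum]
  refine Finset.prod_le_prod (fun _ _ => abs_nonneg _) fun i _ => ?_
  rw [abs_pow]
  gcongr
  exact Finset.single_le_sum (fun i _ => abs_nonneg (x i)) (Finset.mem_univ i)

end Moments

section SegalFamily

variable {ι : Type*} [Fintype ι] [DecidableEq ι] {μ : Measure (ι → ℝ)} {N : ℕ∞}
  {p : (ι →₀ ℕ) → MvPolynomial ι ℝ}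

theorem IsSegalFamily.totalDegree_le (hp : IsSegalFamily μ N p) {β : ι →₀ ℕ}
    (hβ : (mdeg β : ℕ∞) < N) : (p β).totalDegree ≤ mdeg β := by
  induction hk : mdeg β generalizing β with
  | zero =>
    rw [mdeg_eq_degree, Finsupp.degree_eq_zero_iff] at hk
    rw [hk, hp.1, totalDegree_one]
  | succ k ih =>
    refine totalDegree_le_add_one_of_pderiv fun j => ?_
    rw [hp.2.1 β hβ j]
    by_cases hj : β j = 0
    · simp [hj]
    · have hsub := mdeg_sub_single_add_one hj
      refine (totalDegree_smul_le _ _).trans (ih (lt_of_le_of_lt ?_ hβ) (by omega))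
      exact_mod_cast (show mdeg (β - Finsupp.single j 1) ≤ mdeg β by omega)

theorem IsSegalFamily.integrable_eval (hμ : HasMoments μ N) (hp : IsSegalFamily μ N p)
    {β : ι →₀ ℕ} (hβ : (mdeg β : ℕ∞) < N) : Integrable (fun x => eval x (p β)) μ :=
  hμ.integrable_eval (lt_of_le_of_lt (by exact_mod_cast hp.totalDegree_le hβ) hβ)

theorem IsSegalFamily.integral_eval [IsProbabilityMeasure μ] (hp : IsSegalFamily μ N p)
    {β : ι →₀ ℕ} (hβ : (mdeg β : ℕ∞) < N) :
    ∫ x, eval x (p β) ∂μ = if β = 0 then 1 else 0 := by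
  split_ifs with h
  · simp [h, hp.1]
  · refine hp.2.2 β (Nat.pos_of_ne_zero fun h0 => h ?_) hβ
    rwa [mdeg_eq_degree, Finsupp.degree_eq_zero_iff] at h0

theorem IsSegalFamily.pderiv_segalMap (hp : IsSegalFamily μ N p) {f : MvPolynomial ι ℝ}
    (hf : (f.totalDegree : ℕ∞) < N) (j : ι) :
    pderiv j (segalMap p f) = segalMap p (pderiv j f) := by
  rw [f.as_sum]
  simp only [map_sum]
  refine Finset.sum_congr rfl fun β hβ => ?_
  have hβN : (mdeg β : ℕ∞) < N := lt_of_le_of_lt (by exact_mod_cast mdeg_le_totalDegree hβ) hf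
  rw [segalMap_monomial, pderiv_monomial, segalMap_monomial, Derivation.map_smul,
    hp.2.1 β hβN j, smul_smul]

theorem IsSegalFamily.integrable_segalMap (hμ : HasMoments μ N) (hp : IsSegalFamily μ N p)
    {f : MvPolynomial ι ℝ} (hf : (f.totalDegree : ℕ∞) < N) :
    Integrable (fun x => eval x (segalMap p f)) μ := by
  simp only [eval_segalMap]
  exact integrable_finsetSum _ fun β hβ => (hp.integrable_eval hμ
    (lt_of_le_of_lt (by exact_mod_cast mdeg_le_totalDegree hβ) hf)).const_mul _

theorem IsSegalFamily.integral_segalMap [IsProbabilityMeasure μ] (hμ : HasMoments μ N)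
    (hp : IsSegalFamily μ N p) {f : MvPolynomial ι ℝ} (hf : (f.totalDegree : ℕ∞) < N) :
    ∫ x, eval x (segalMap p f) ∂μ = constantCoeff f := by
  have hβN : ∀ β ∈ f.support, (mdeg β : ℕ∞) < N := fun β hβ =>
    lt_of_le_of_lt (by exact_mod_cast mdeg_le_totalDegree hβ) hf
  simp only [eval_segalMap]
  rw [integral_finsetSum _ fun β hβ => ((hp.integrable_eval hμ (hβN β hβ)).const_mul _)]
  rw [Finset.sum_congr rfl fun β hβ => by rw [integral_const_mul, hp.integral_eval (hβN β hβ)]]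
  simp [constantCoeff_eq, eq_comm]

end SegalFamily

theorem IsAppellFamily.aeval_sum_smul_X_eq_segalMap {ι : Type*} [Fintype ι] [DecidableEq ι]
    {μ : Measure (ι → ℝ)} [IsProbabilityMeasure μ] {N : ℕ∞} (hμ : HasMoments μ N) {c : ι → ℝ}
    {p : (ι →₀ ℕ) → MvPolynomial ι ℝ} {q : ℕ → Polynomial ℝ} (hp : IsSegalFamily μ N p)
    (hq : IsAppellFamily (μ.map fun x => ∑ i, c i * x i) N q) {k : ℕ} (hk : (k : ℕ∞) < N) :
    Polynomial.aeval (∑ i, c i • X i) (q k) =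
      segalMap p ((∑ i, c i • X i : MvPolynomial ι ℝ) ^ k) := by
  set L : MvPolynomial ι ℝ := ∑ i, c i • X i
  have hL := isHomogeneous_sum_smul_X c
  induction k with
  | zero => rw [pow_zero, segalMap_one, hp.1, hq.1, map_one]
  | succ m ih =>
    have hdeg : ((L ^ (m + 1)).totalDegree : ℕ∞) < N :=
      lt_of_le_of_lt (by exact_mod_cast (hL.pow _).totalDegree_le.trans (one_mul _).le) hk
    refine eq_of_pderiv_eq_of_integral_eval_eq (hp.integrable_segalMap hμ hdeg) (fun j => ?_) ?_
    · have hpow : pderiv j (L ^ (m + 1)) = (((m : ℝ) + 1) * c j) • L ^ m := by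
        rw [pderiv_pow, pderiv_sum_smul_X, add_tsub_cancel_right, smul_eq_C_mul, C_mul, map_add,
          map_natCast, map_one, Nat.cast_succ]
        ring
      rw [Derivation.map_aeval, hq.2.1 m hk, map_smul, ih (lt_of_le_of_lt (by simp) hk),
        hp.pderiv_segalMap hdeg, hpow, map_smul, pderiv_sum_smul_X, smul_eq_mul, smul_eq_C_mul,
        smul_eq_C_mul, C_mul]
      ring
    · have hT : Measurable fun x : ι → ℝ => ∑ i, c i * x i := by fun_prop
      have hQ : ∫ y, (q (m + 1)).eval y ∂(μ.map fun x => ∑ i, c i * x i) = 0 :=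
        hq.2.2 (m + 1) m.succ_pos hk
      simp only [eval_polynomial_aeval, L, eval_sum_smul_X]
      rw [← integral_map hT.aemeasurable (q (m + 1)).continuous.aestronglyMeasurable, hQ,
        hp.integral_segalMap hμ hdeg, constantCoeff_eq,
        (hL.pow (m + 1)).coeff_eq_zero (by simp)]

theorem segal_multinomial {n : ℕ} (μ : Measure (Fin n → ℝ)) [IsProbabilityMeasure μ]
    (N : ℕ∞) (hmom : HasMoments μ N) (c : Fin n → ℝ)
    (p : (Fin n →₀ ℕ) → MvPolynomial (Fin n) ℝ) (q : ℕ → Polynomial ℝ)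
    (hp : IsSegalFamily μ N p)
    (hq : IsAppellFamily (μ.map (fun x : Fin n → ℝ => ∑ i, c i * x i)) N q)
    (k : ℕ) (hk : (k : ℕ∞) < N) (x : Fin n → ℝ) :
    (q k).eval (∑ i, c i * x i) =
      ∑ᶠ β : Fin n →₀ ℕ,
        if mdeg β = k then
          ((Nat.factorial k : ℕ) : ℝ) / ((∏ i, Nat.factorial (β i) : ℕ) : ℝ) *
            (∏ i, c i ^ β i) * eval x (p β)
        else 0 := by
  set F : MvPolynomial (Fin n) ℝ := (∑ i, c i • X i) ^ k
  have hterm : ∀ β : Fin n →₀ ℕ, (if mdeg β = k then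
      ((Nat.factorial k : ℕ) : ℝ) / ((∏ i, Nat.factorial (β i) : ℕ) : ℝ) *
        (∏ i, c i ^ β i) * eval x (p β) else 0) = coeff β F * eval x (p β) := fun β => by
    rw [coeff_sum_smul_X_pow, ite_mul, zero_mul]
  rw [finsum_congr hterm, finsum_eq_sum_of_support_subset _ fun β hβ =>
      mem_support_iff.mpr (left_ne_zero_of_mul hβ), ← eval_segalMap,
    ← hq.aeval_sum_smul_X_eq_segalMap hmom hp hk, eval_polynomial_aeval, eval_sum_smul_X]
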